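/- Let φ : ℝⁿ \ {0} → (0,∞) be continuous with finite Φ(t,u) for each t > 0, and suppose φ(x)|x|ⁿ is strictly radially decreasing, i.e., s ↦ φ(su)sⁿ is strictly decreasing in s ∈ (0,∞) for each u ∈ S^{n-1}. If K and L are convex bodies containing the origin in their interiors with C̃_{φ,𝒱}(K,·) = C̃_{φ,𝒱}(L,·) as measures on S^{n-1}, then K = L. -/
import Mathlib


open MeasureTheory Metric Set Filter
open scoped ENNReal NNReal Topology Pointwise RealInnerProductSpace

noncomputable section

/-- The spherical (surface) measure on the unit sphere of `ℝⁿ`. -/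
def sphMeasure (n : ℕ) : Measure (sphere (0 : EuclideanSpace ℝ (Fin n)) 1) :=
  (volume : Measure (EuclideanSpace ℝ (Fin n))).toSphere

/-- The radial function of a set. -/
def radialFn {n : ℕ} (K : Set (EuclideanSpace ℝ (Fin n)))
    (u : sphere (0 : EuclideanSpace ℝ (Fin n)) 1) : ℝ :=
  sSup {r : ℝ | 0 < r ∧ r • (u : EuclideanSpace ℝ (Fin n)) ∈ K}

/-- The support function of a set. -/
def suppFn {n : ℕ} (K : Set (EuclideanSpace ℝ (Fin n))) (v : EuclideanSpace ℝ (Fin n)) : ℝ :=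
  sSup ((fun x => ⟪x, v⟫) '' K)

/-- The reverse radial Gauss image of `η ⊆ Sⁿ⁻¹`. -/
def revGauss {n : ℕ} (K : Set (EuclideanSpace ℝ (Fin n)))
    (η : Set (sphere (0 : EuclideanSpace ℝ (Fin n)) 1)) :
    Set (sphere (0 : EuclideanSpace ℝ (Fin n)) 1) :=
  {u | ∃ v ∈ η, ⟪radialFn K u • (u : EuclideanSpace ℝ (Fin n)),
      (v : EuclideanSpace ℝ (Fin n))⟫ = suppFn K (v : EuclideanSpace ℝ (Fin n))}

/-- The general dual Orlicz curvature measure, as a set function. -/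
def dualCurv {n : ℕ} (φ : EuclideanSpace ℝ (Fin n) → ℝ) (K : Set (EuclideanSpace ℝ (Fin n)))
    (η : Set (sphere (0 : EuclideanSpace ℝ (Fin n)) 1)) : ℝ≥0∞ :=
  ∫⁻ u in revGauss K η,
    ENNReal.ofReal (φ (radialFn K u • (u : EuclideanSpace ℝ (Fin n))) * radialFn K u ^ n)
    ∂(sphMeasure n)

section Body

variable {n : ℕ} {K : Set (EuclideanSpace ℝ (Fin n))}

lemma sphere_coe_ne_zero (u : sphere (0 : EuclideanSpace ℝ (Fin n)) 1) :
    (u : EuclideanSpace ℝ (Fin n)) ≠ 0 := by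
  have := u.2
  simp only [mem_sphere_iff_norm, sub_zero] at this
  intro h
  rw [h, norm_zero] at this
  norm_num at this

lemma radialSet_nonempty (hK0 : (0 : EuclideanSpace ℝ (Fin n)) ∈ interior K)
    (u : sphere (0 : EuclideanSpace ℝ (Fin n)) 1) :
    {r : ℝ | 0 < r ∧ r • (u : EuclideanSpace ℝ (Fin n)) ∈ K}.Nonempty := by
  obtain ⟨ε, hε, hball⟩ := Metric.mem_nhds_iff.1 (mem_interior_iff_mem_nhds.1 hK0)
  refine ⟨ε / 2, half_pos hε, hball (show _ ∈ ball (0 : EuclideanSpace ℝ (Fin n)) ε from ?_)⟩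
  simp only [mem_ball, dist_zero_right, norm_smul, Real.norm_eq_abs,
    abs_of_pos (half_pos hε)]
  have : ‖(u : EuclideanSpace ℝ (Fin n))‖ = 1 := by
    have := u.2; simpa [mem_sphere_iff_norm] using this
  rw [this, mul_one]
  linarith

lemma radialSet_bddAbove (hKcomp : IsCompact K)
    (u : sphere (0 : EuclideanSpace ℝ (Fin n)) 1) :
    BddAbove {r : ℝ | 0 < r ∧ r • (u : EuclideanSpace ℝ (Fin n)) ∈ K} := by
  obtain ⟨R, hR⟩ := hKcomp.isBounded.subset_closedBall 0
  refine ⟨R, fun r hr => ?_⟩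
  have := hR hr.2
  simp only [mem_closedBall, dist_zero_right, norm_smul, Real.norm_eq_abs] at this
  have hu : ‖(u : EuclideanSpace ℝ (Fin n))‖ = 1 := by
    have := u.2; simpa [mem_sphere_iff_norm] using this
  rw [hu, mul_one, abs_of_pos hr.1] at this
  exact this

lemma radialFn_pos (hKcomp : IsCompact K)
    (hK0 : (0 : EuclideanSpace ℝ (Fin n)) ∈ interior K)
    (u : sphere (0 : EuclideanSpace ℝ (Fin n)) 1) : 0 < radialFn K u := by
  obtain ⟨r, hr⟩ := radialSet_nonempty hK0 u
  exact lt_of_lt_of_le hr.1 (le_csSup (radialSet_bddAbove hKcomp u) hr)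

lemma smul_mem_of_le (hKconv : Convex ℝ K)
    (hK0 : (0 : EuclideanSpace ℝ (Fin n)) ∈ interior K)
    {u : sphere (0 : EuclideanSpace ℝ (Fin n)) 1} {r s : ℝ}
    (hr : 0 < r) (hrs : r ≤ s) (hs : s • (u : EuclideanSpace ℝ (Fin n)) ∈ K) :
    r • (u : EuclideanSpace ℝ (Fin n)) ∈ K := by
  have h0 : (0 : EuclideanSpace ℝ (Fin n)) ∈ K := interior_subset hK0
  have hspos : 0 < s := lt_of_lt_of_le hr hrs
  have : (r / s) • (s • (u : EuclideanSpace ℝ (Fin n))) ∈ K := by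
    refine hKconv.smul_mem_of_zero_mem h0 hs ⟨by positivity, ?_⟩
    rw [div_le_one hspos]; exact hrs
  rwa [smul_smul, div_mul_cancel₀ _ hspos.ne'] at this

lemma radialFn_smul_mem (hKconv : Convex ℝ K) (hKcomp : IsCompact K)
    (hK0 : (0 : EuclideanSpace ℝ (Fin n)) ∈ interior K)
    (u : sphere (0 : EuclideanSpace ℝ (Fin n)) 1) :
    radialFn K u • (u : EuclideanSpace ℝ (Fin n)) ∈ K := by
  set ρ := radialFn K u with hρ
  have hρpos : 0 < ρ := radialFn_pos hKcomp hK0 u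
  have hsub : Ioo 0 ρ ⊆ {r : ℝ | 0 < r ∧ r • (u : EuclideanSpace ℝ (Fin n)) ∈ K} := by
    intro r hr
    obtain ⟨s, hsmem, hrs⟩ := exists_lt_of_lt_csSup (radialSet_nonempty hK0 u) hr.2
    exact ⟨hr.1, smul_mem_of_le hKconv hK0 hr.1 hrs.le hsmem.2⟩
  have hclosed : IsClosed K := hKcomp.isClosed
  have htend : Tendsto (fun r : ℝ => r • (u : EuclideanSpace ℝ (Fin n))) (𝓝[<] ρ)
      (𝓝 (ρ • (u : EuclideanSpace ℝ (Fin n)))) :=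
    ((continuous_id.smul continuous_const).tendsto ρ).mono_left nhdsWithin_le_nhds
  refine hclosed.mem_of_tendsto htend ?_
  filter_upwards [Ioo_mem_nhdsLT hρpos] with r hr
  exact (hsub hr).2

lemma le_radialFn_of_mem (hKcomp : IsCompact K)
    {u : sphere (0 : EuclideanSpace ℝ (Fin n)) 1} {r : ℝ} (hr : 0 < r)
    (h : r • (u : EuclideanSpace ℝ (Fin n)) ∈ K) : r ≤ radialFn K u :=
  le_csSup (radialSet_bddAbove hKcomp u) ⟨hr, h⟩

lemma smul_mem_iff_le_radialFn (hKconv : Convex ℝ K) (hKcomp : IsCompact K)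
    (hK0 : (0 : EuclideanSpace ℝ (Fin n)) ∈ interior K)
    {u : sphere (0 : EuclideanSpace ℝ (Fin n)) 1} {r : ℝ} (hr : 0 < r) :
    r • (u : EuclideanSpace ℝ (Fin n)) ∈ K ↔ r ≤ radialFn K u := by
  constructor
  · exact le_radialFn_of_mem hKcomp hr
  · intro h
    exact smul_mem_of_le hKconv hK0 hr h (radialFn_smul_mem hKconv hKcomp hK0 u)

lemma gauge_eq_radialFn_inv (hKconv : Convex ℝ K) (hKcomp : IsCompact K)
    (hK0 : (0 : EuclideanSpace ℝ (Fin n)) ∈ interior K)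
    (u : sphere (0 : EuclideanSpace ℝ (Fin n)) 1) :
    gauge K (u : EuclideanSpace ℝ (Fin n)) = (radialFn K u)⁻¹ := by
  set ρ := radialFn K u with hρ
  have hρpos : 0 < ρ := radialFn_pos hKcomp hK0 u
  apply le_antisymm
  · refine gauge_le_of_mem (by positivity) ?_
    exact ⟨ρ • (u : EuclideanSpace ℝ (Fin n)), radialFn_smul_mem hKconv hKcomp hK0 u,
      show ρ⁻¹ • ρ • _ = _ by rw [smul_smul, inv_mul_cancel₀ hρpos.ne', one_smul]⟩
  · rw [gauge]
    refine le_csInf ⟨ρ⁻¹, by positivity,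
      ⟨ρ • (u : EuclideanSpace ℝ (Fin n)), radialFn_smul_mem hKconv hKcomp hK0 u,
        show ρ⁻¹ • ρ • _ = _ by rw [smul_smul, inv_mul_cancel₀ hρpos.ne', one_smul]⟩⟩ ?_
    rintro b ⟨hb, x, hx, hbx⟩
    have : b⁻¹ • (u : EuclideanSpace ℝ (Fin n)) ∈ K := by
      have : b⁻¹ • (b • x) = x := by rw [smul_smul, inv_mul_cancel₀ hb.ne', one_smul]
      rw [← hbx, this]; exact hx
    have hle : b⁻¹ ≤ ρ := le_radialFn_of_mem hKcomp (by positivity) this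
    calc ρ⁻¹ ≤ (b⁻¹)⁻¹ := by
          exact inv_anti₀ (by positivity) hle
      _ = b := inv_inv b

lemma continuous_radialFn (hKconv : Convex ℝ K) (hKcomp : IsCompact K)
    (hK0 : (0 : EuclideanSpace ℝ (Fin n)) ∈ interior K) :
    Continuous (fun u : sphere (0 : EuclideanSpace ℝ (Fin n)) 1 => radialFn K u) := by
  have h1 : ∀ u : sphere (0 : EuclideanSpace ℝ (Fin n)) 1,
      radialFn K u = (gauge K (u : EuclideanSpace ℝ (Fin n)))⁻¹ := by
    intro u
    rw [gauge_eq_radialFn_inv hKconv hKcomp hK0 u, inv_inv]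
  simp_rw [h1]
  have hg : Continuous (gauge K) :=
    continuous_gauge hKconv (mem_interior_iff_mem_nhds.1 hK0)
  refine (hg.comp continuous_subtype_val).inv₀ ?_
  intro u
  show gauge K (u : EuclideanSpace ℝ (Fin n)) ≠ 0
  rw [gauge_eq_radialFn_inv hKconv hKcomp hK0 u]
  exact inv_ne_zero (radialFn_pos hKcomp hK0 u).ne'

end Body

section Supp

variable {n : ℕ} {K : Set (EuclideanSpace ℝ (Fin n))}

lemma inner_le_suppFn (hKcomp : IsCompact K) {x : EuclideanSpace ℝ (Fin n)} (hx : x ∈ K)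
    (v : EuclideanSpace ℝ (Fin n)) : ⟪x, v⟫ ≤ suppFn K v := by
  refine le_csSup ?_ (mem_image_of_mem _ hx)
  exact (hKcomp.image (continuous_id.inner continuous_const)).bddAbove

lemma suppFn_pos (hKcomp : IsCompact K) (hK0 : (0 : EuclideanSpace ℝ (Fin n)) ∈ interior K)
    {v : EuclideanSpace ℝ (Fin n)} (hv : v ≠ 0) : 0 < suppFn K v := by
  obtain ⟨ε, hε, hball⟩ := Metric.mem_nhds_iff.1 (mem_interior_iff_mem_nhds.1 hK0)
  have hvn : 0 < ‖v‖ := norm_pos_iff.2 hv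
  have hx : (ε / 2 / ‖v‖) • v ∈ K := by
    refine hball ?_
    simp only [mem_ball, dist_zero_right, norm_smul, Real.norm_eq_abs]
    rw [abs_of_pos (by positivity), div_mul_cancel₀ _ hvn.ne']
    linarith
  have : (0 : ℝ) < ⟪(ε / 2 / ‖v‖) • v, v⟫ := by
    rw [real_inner_smul_left, real_inner_self_eq_norm_sq]
    positivity
  exact lt_of_lt_of_le this (inner_le_suppFn hKcomp hx v)

lemma continuous_suppFn (hKcomp : IsCompact K)
    (hK0 : (0 : EuclideanSpace ℝ (Fin n)) ∈ interior K) :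
    Continuous (suppFn K) := by
  obtain ⟨R, hR⟩ := hKcomp.isBounded.subset_closedBall 0
  set R' := max R 0 with hR'
  have hR'0 : 0 ≤ R' := le_max_right _ _
  have hne : K.Nonempty := ⟨0, interior_subset hK0⟩
  have key : ∀ v w : EuclideanSpace ℝ (Fin n),
      suppFn K v ≤ suppFn K w + R' * ‖v - w‖ := by
    intro v w
    refine csSup_le (hne.image _) ?_
    rintro b ⟨y, hy, rfl⟩
    have h1 : ⟪y, v - w⟫ = ⟪y, v⟫ - ⟪y, w⟫ := inner_sub_right y v w
    have h2 : ⟪y, w⟫ ≤ suppFn K w := inner_le_suppFn hKcomp hy w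
    have h3 : ⟪y, v - w⟫ ≤ ‖y‖ * ‖v - w‖ := real_inner_le_norm y (v - w)
    have h4 : ‖y‖ ≤ R' := le_trans (by simpa [mem_closedBall, dist_zero_right] using hR hy)
      (le_max_left _ _)
    have h5 : ‖y‖ * ‖v - w‖ ≤ R' * ‖v - w‖ :=
      mul_le_mul_of_nonneg_right h4 (norm_nonneg _)
    linarith
  have hlip : LipschitzWith (Real.toNNReal R') (suppFn K) := by
    refine LipschitzWith.of_dist_le_mul fun v w => ?_
    have k1 := key v w
    have k2 := key w v
    have hsym : ‖w - v‖ = ‖v - w‖ := norm_sub_rev w v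
    rw [hsym] at k2
    have hc : (Real.toNNReal R' : ℝ) = R' := Real.coe_toNNReal _ hR'0
    rw [Real.dist_eq, abs_sub_le_iff, dist_eq_norm, hc]
    constructor
    · linarith
    · linarith
  exact hlip.continuous

lemma exists_supporting (hKconv : Convex ℝ K) (hKcomp : IsCompact K)
    (hK0 : (0 : EuclideanSpace ℝ (Fin n)) ∈ interior K)
    (u : sphere (0 : EuclideanSpace ℝ (Fin n)) 1) :
    ∃ v : sphere (0 : EuclideanSpace ℝ (Fin n)) 1,
      ⟪radialFn K u • (u : EuclideanSpace ℝ (Fin n)), (v : EuclideanSpace ℝ (Fin n))⟫ =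
        suppFn K (v : EuclideanSpace ℝ (Fin n)) := by
  set ρ := radialFn K u with hρdef
  have hρpos : 0 < ρ := radialFn_pos hKcomp hK0 u
  set x := ρ • (u : EuclideanSpace ℝ (Fin n)) with hxdef
  have hxK : x ∈ K := radialFn_smul_mem hKconv hKcomp hK0 u
  -- x is not in the interior
  have hxint : x ∉ interior K := by
    intro hx
    have hev : ∀ᶠ t in 𝓝 ρ, t • (u : EuclideanSpace ℝ (Fin n)) ∈ K := by
      have hcont : Continuous (fun t : ℝ => t • (u : EuclideanSpace ℝ (Fin n))) :=
        continuous_id.smul continuous_const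
      have := (hcont.tendsto ρ).eventually (isOpen_interior.eventually_mem hx)
      filter_upwards [this] with t ht
      exact interior_subset ht
    have hev' : ∀ᶠ t in 𝓝[>] ρ, t • (u : EuclideanSpace ℝ (Fin n)) ∈ K :=
      hev.filter_mono nhdsWithin_le_nhds
    obtain ⟨t, htK, htρ⟩ := (hev'.and self_mem_nhdsWithin).exists
    have : t ≤ ρ := le_radialFn_of_mem hKcomp (lt_trans hρpos htρ) htK
    exact absurd this (not_le.2 htρ)
  obtain ⟨f, hf⟩ := geometric_hahn_banach_open_point (hKconv.interior) isOpen_interior hxint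
  have hfx : 0 < f x := by
    have := hf 0 hK0
    simpa using this
  -- f y ≤ f x for all y in K
  have hfK : ∀ y ∈ K, f y ≤ f x := by
    intro y hy
    by_contra hlt
    push_neg at hlt
    have hfy : 0 < f y := lt_trans hfx hlt
    obtain ⟨a, ha1, ha2⟩ := exists_between ((div_lt_one hfy).2 hlt)
    have ha0 : 0 ≤ a := le_of_lt (lt_of_le_of_lt (by positivity) ha1)
    have hmem : a • y + (1 - a) • (0 : EuclideanSpace ℝ (Fin n)) ∈ interior K :=
      hKconv.combo_closure_interior_mem_interior (subset_closure hy) hK0 ha0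
        (by linarith) (by ring)
    rw [smul_zero, add_zero] at hmem
    have h2 : f (a • y) < f x := hf _ hmem
    rw [f.map_smul, smul_eq_mul] at h2
    have h3 : f x < a * f y := (div_lt_iff₀ hfy).1 ha1
    linarith
  set v' := (InnerProductSpace.toDual ℝ (EuclideanSpace ℝ (Fin n))).symm f with hv'def
  have hfv' : ∀ y, ⟪v', y⟫ = f y := fun y => InnerProductSpace.toDual_symm_apply
  have hv'ne : v' ≠ 0 := by
    intro h
    have := hfv' x
    rw [h, inner_zero_left] at this
    linarith
  have hnv' : 0 < ‖v'‖ := norm_pos_iff.2 hv'ne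
  refine ⟨⟨‖v'‖⁻¹ • v', ?_⟩, ?_⟩
  · simp only [mem_sphere_iff_norm, sub_zero, norm_smul, norm_inv, norm_norm]
    exact inv_mul_cancel₀ hnv'.ne'
  · show ⟪x, ‖v'‖⁻¹ • v'⟫ = suppFn K (‖v'‖⁻¹ • v')
    refine le_antisymm (inner_le_suppFn hKcomp hxK _) ?_
    refine csSup_le ⟨_, mem_image_of_mem _ hxK⟩ ?_
    rintro b ⟨y, hy, rfl⟩
    simp only [real_inner_smul_right]
    have hyx : ⟪y, v'⟫ ≤ ⟪x, v'⟫ := by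
      have e1 := hfv' y
      have e2 := hfv' x
      rw [real_inner_comm] at e1 e2
      rw [e1, e2]
      exact hfK y hy
    exact mul_le_mul_of_nonneg_left hyx (by positivity)

end Supp

section MeasureLemmas

variable {n : ℕ}

instance : IsFiniteMeasure (sphMeasure n) := by unfold sphMeasure; infer_instance

lemma sphMeasure_open_pos {s : Set (sphere (0 : EuclideanSpace ℝ (Fin n)) 1)}
    (hs : IsOpen s) (hne : s.Nonempty) : 0 < sphMeasure n s := by
  obtain ⟨u0, hu0⟩ := hne
  haveI : Nontrivial (EuclideanSpace ℝ (Fin n)) :=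
    ⟨⟨(u0 : EuclideanSpace ℝ (Fin n)), 0, sphere_coe_ne_zero u0⟩⟩
  rw [sphMeasure, Measure.toSphere_apply' _ hs.measurableSet]
  refine ENNReal.mul_pos ?_ ?_
  · exact_mod_cast Nat.cast_ne_zero.2 Module.finrank_pos.ne'
  · -- find an open subset of the cone
    obtain ⟨V, hVopen, hVeq⟩ := isOpen_induced_iff.1 hs
    set W : Set (EuclideanSpace ℝ (Fin n)) := (fun x => ‖x‖) ⁻¹' Ioo (0 : ℝ) 1 with hW
    have hWopen : IsOpen W := isOpen_Ioo.preimage continuous_norm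
    have hgcont : ContinuousOn (fun x : EuclideanSpace ℝ (Fin n) => ‖x‖⁻¹ • x) W := by
      refine ContinuousOn.smul (ContinuousOn.inv₀ continuous_norm.continuousOn ?_) continuousOn_id
      intro x hx
      exact (mem_Ioo.1 hx).1.ne'
    set U := W ∩ (fun x : EuclideanSpace ℝ (Fin n) => ‖x‖⁻¹ • x) ⁻¹' V with hU
    have hUopen : IsOpen U := hgcont.isOpen_inter_preimage hWopen hVopen
    have hu0n : ‖(u0 : EuclideanSpace ℝ (Fin n))‖ = 1 := by
      have := u0.2; simpa [mem_sphere_iff_norm] using this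
    have hu0V : (u0 : EuclideanSpace ℝ (Fin n)) ∈ V := by rw [← hVeq] at hu0; exact hu0
    have hUne : U.Nonempty := by
      refine ⟨(1 / 2 : ℝ) • (u0 : EuclideanSpace ℝ (Fin n)), ?_, ?_⟩
      · simp only [hW, mem_preimage, mem_Ioo, norm_smul, Real.norm_eq_abs, hu0n, mul_one]
        rw [abs_of_pos] <;> norm_num
      · have hn : ‖(1 / 2 : ℝ) • (u0 : EuclideanSpace ℝ (Fin n))‖ = 1 / 2 := by
          rw [norm_smul, Real.norm_eq_abs, hu0n, mul_one, abs_of_pos]; norm_num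
        show ‖(1 / 2 : ℝ) • (u0 : EuclideanSpace ℝ (Fin n))‖⁻¹ •
            ((1 / 2 : ℝ) • (u0 : EuclideanSpace ℝ (Fin n))) ∈ V
        rw [hn]
        have he : ((1 / 2 : ℝ))⁻¹ • (1 / 2 : ℝ) • (u0 : EuclideanSpace ℝ (Fin n)) =
            (u0 : EuclideanSpace ℝ (Fin n)) := by
          rw [smul_smul]; norm_num
        rw [he]
        exact hu0V
    have hUsub : U ⊆ Ioo (0 : ℝ) 1 • (Subtype.val '' s) := by
      rintro x ⟨hxW, hxV⟩
      have hx0 : 0 < ‖x‖ := (mem_Ioo.1 hxW).1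
      have hy1 : ‖‖x‖⁻¹ • x‖ = 1 := by
        rw [norm_smul, Real.norm_eq_abs, abs_of_pos (by positivity), inv_mul_cancel₀ hx0.ne']
      have hysph : ‖x‖⁻¹ • x ∈ sphere (0 : EuclideanSpace ℝ (Fin n)) 1 := by
        simp [mem_sphere_iff_norm, hy1]
      have hys : (⟨‖x‖⁻¹ • x, hysph⟩ : sphere (0 : EuclideanSpace ℝ (Fin n)) 1) ∈ s := by
        rw [← hVeq]; exact hxV
      refine Set.mem_smul.2 ⟨‖x‖, hxW, ‖x‖⁻¹ • x, ⟨_, hys, rfl⟩, ?_⟩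
      rw [smul_smul, mul_inv_cancel₀ hx0.ne', one_smul]
    have hpos : 0 < volume U := hUopen.measure_pos volume hUne
    exact (lt_of_lt_of_le hpos (measure_mono hUsub)).ne'

end MeasureLemmas

section Main

variable {n : ℕ}

lemma subset_of_radialFn_le {K L : Set (EuclideanSpace ℝ (Fin n))}
    (hKcomp : IsCompact K)
    (hLconv : Convex ℝ L) (hLcomp : IsCompact L)
    (hL0 : (0 : EuclideanSpace ℝ (Fin n)) ∈ interior L)
    (h : ∀ u : sphere (0 : EuclideanSpace ℝ (Fin n)) 1, radialFn K u ≤ radialFn L u) :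
    K ⊆ L := by
  intro x hx
  rcases eq_or_ne x 0 with rfl | hx0
  · exact interior_subset hL0
  · have hnx : 0 < ‖x‖ := norm_pos_iff.2 hx0
    have husph : ‖x‖⁻¹ • x ∈ sphere (0 : EuclideanSpace ℝ (Fin n)) 1 := by
      simp only [mem_sphere_iff_norm, sub_zero, norm_smul, Real.norm_eq_abs,
        abs_of_pos (inv_pos.2 hnx)]
      exact inv_mul_cancel₀ hnx.ne'
    set u : sphere (0 : EuclideanSpace ℝ (Fin n)) 1 := ⟨‖x‖⁻¹ • x, husph⟩ with hudef
    have hxu : x = ‖x‖ • (u : EuclideanSpace ℝ (Fin n)) := by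
      show x = ‖x‖ • ‖x‖⁻¹ • x
      rw [smul_smul, mul_inv_cancel₀ hnx.ne', one_smul]
    have h1 : ‖x‖ ≤ radialFn K u := by
      refine le_radialFn_of_mem hKcomp hnx ?_
      rw [← hxu]; exact hx
    have h2 := smul_mem_of_le hLconv hL0 hnx (h1.trans (h u))
      (radialFn_smul_mem hLconv hLcomp hL0 u)
    rw [← hxu] at h2
    exact h2

lemma key_radial_le (φ : EuclideanSpace ℝ (Fin n) → ℝ)
    (hφc : ContinuousOn φ {(0 : EuclideanSpace ℝ (Fin n))}ᶜ)
    (hφp : ∀ x : EuclideanSpace ℝ (Fin n), x ≠ 0 → 0 < φ x)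
    (hrad : ∀ u : sphere (0 : EuclideanSpace ℝ (Fin n)) 1,
      StrictAntiOn (fun s : ℝ => φ (s • (u : EuclideanSpace ℝ (Fin n))) * s ^ n) (Ioi (0 : ℝ)))
    {K L : Set (EuclideanSpace ℝ (Fin n))}
    (hKconv : Convex ℝ K) (hKcomp : IsCompact K)
    (hK0 : (0 : EuclideanSpace ℝ (Fin n)) ∈ interior K)
    (hLconv : Convex ℝ L) (hLcomp : IsCompact L)
    (hL0 : (0 : EuclideanSpace ℝ (Fin n)) ∈ interior L)
    (heq : ∀ η : Set (sphere (0 : EuclideanSpace ℝ (Fin n)) 1), MeasurableSet η →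
      dualCurv φ K η = dualCurv φ L η) :
    ∀ u : sphere (0 : EuclideanSpace ℝ (Fin n)) 1, radialFn K u ≤ radialFn L u := by
  by_contra hcon
  push_neg at hcon
  obtain ⟨u0, hu0⟩ := hcon
  set ω : Set (sphere (0 : EuclideanSpace ℝ (Fin n)) 1) :=
    {u | radialFn L u < radialFn K u} with hωdef
  have hωopen : IsOpen ω :=
    isOpen_lt (continuous_radialFn hLconv hLcomp hL0) (continuous_radialFn hKconv hKcomp hK0)
  have hωne : ω.Nonempty := ⟨u0, hu0⟩
  set η : Set (sphere (0 : EuclideanSpace ℝ (Fin n)) 1) :=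
    {v | suppFn L (v : EuclideanSpace ℝ (Fin n)) < suppFn K (v : EuclideanSpace ℝ (Fin n))}
    with hηdef
  have hηopen : IsOpen η :=
    isOpen_lt ((continuous_suppFn hLcomp hL0).comp continuous_subtype_val)
      ((continuous_suppFn hKcomp hK0).comp continuous_subtype_val)
  -- revGauss K η ⊆ ω
  have hKη : revGauss K η ⊆ ω := by
    rintro u ⟨v, hvη, hv⟩
    have h1 : suppFn L (v : EuclideanSpace ℝ (Fin n)) <
        suppFn K (v : EuclideanSpace ℝ (Fin n)) := hvη
    have h2 : ⟪radialFn L u • (u : EuclideanSpace ℝ (Fin n)), (v : EuclideanSpace ℝ (Fin n))⟫ ≤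
        suppFn L (v : EuclideanSpace ℝ (Fin n)) :=
      inner_le_suppFn hLcomp (radialFn_smul_mem hLconv hLcomp hL0 u) _
    rw [real_inner_smul_left] at h2 hv
    have hKv : 0 < suppFn K (v : EuclideanSpace ℝ (Fin n)) :=
      suppFn_pos hKcomp hK0 (sphere_coe_ne_zero v)
    have hρK := radialFn_pos hKcomp hK0 u
    have huv : 0 < ⟪(u : EuclideanSpace ℝ (Fin n)), (v : EuclideanSpace ℝ (Fin n))⟫ := by
      nlinarith
    show radialFn L u < radialFn K u
    have hmul : radialFn L u * ⟪(u : EuclideanSpace ℝ (Fin n)), (v : EuclideanSpace ℝ (Fin n))⟫ <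
        radialFn K u * ⟪(u : EuclideanSpace ℝ (Fin n)), (v : EuclideanSpace ℝ (Fin n))⟫ := by
      linarith
    exact lt_of_mul_lt_mul_right (by linarith) huv.le
  -- ω ⊆ revGauss L η
  have hLω : ω ⊆ revGauss L η := by
    intro u huω
    obtain ⟨v, hv⟩ := exists_supporting hLconv hLcomp hL0 u
    refine ⟨v, ?_, hv⟩
    show suppFn L (v : EuclideanSpace ℝ (Fin n)) < suppFn K (v : EuclideanSpace ℝ (Fin n))
    have hLv : 0 < suppFn L (v : EuclideanSpace ℝ (Fin n)) :=
      suppFn_pos hLcomp hL0 (sphere_coe_ne_zero v)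
    rw [real_inner_smul_left] at hv
    have hρL := radialFn_pos hLcomp hL0 u
    have huv : 0 < ⟪(u : EuclideanSpace ℝ (Fin n)), (v : EuclideanSpace ℝ (Fin n))⟫ := by
      nlinarith
    have h2 : ⟪radialFn K u • (u : EuclideanSpace ℝ (Fin n)), (v : EuclideanSpace ℝ (Fin n))⟫ ≤
        suppFn K (v : EuclideanSpace ℝ (Fin n)) :=
      inner_le_suppFn hKcomp (radialFn_smul_mem hKconv hKcomp hK0 u) _
    rw [real_inner_smul_left] at h2
    have huω' : radialFn L u < radialFn K u := huω
    nlinarith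
  -- the integrands
  set FK : sphere (0 : EuclideanSpace ℝ (Fin n)) 1 → ℝ :=
    fun u => φ (radialFn K u • (u : EuclideanSpace ℝ (Fin n))) * radialFn K u ^ n with hFK
  set FL : sphere (0 : EuclideanSpace ℝ (Fin n)) 1 → ℝ :=
    fun u => φ (radialFn L u • (u : EuclideanSpace ℝ (Fin n))) * radialFn L u ^ n with hFL
  have hmapK : Continuous fun u : sphere (0 : EuclideanSpace ℝ (Fin n)) 1 =>
      radialFn K u • (u : EuclideanSpace ℝ (Fin n)) :=
    (continuous_radialFn hKconv hKcomp hK0).smul continuous_subtype_val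
  have hmapL : Continuous fun u : sphere (0 : EuclideanSpace ℝ (Fin n)) 1 =>
      radialFn L u • (u : EuclideanSpace ℝ (Fin n)) :=
    (continuous_radialFn hLconv hLcomp hL0).smul continuous_subtype_val
  have hFKc : Continuous FK := by
    refine Continuous.mul ?_ ((continuous_radialFn hKconv hKcomp hK0).pow n)
    exact hφc.comp_continuous hmapK fun u =>
      smul_ne_zero (radialFn_pos hKcomp hK0 u).ne' (sphere_coe_ne_zero u)
  have hFLc : Continuous FL := by
    refine Continuous.mul ?_ ((continuous_radialFn hLconv hLcomp hL0).pow n)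
    exact hφc.comp_continuous hmapL fun u =>
      smul_ne_zero (radialFn_pos hLcomp hL0 u).ne' (sphere_coe_ne_zero u)
  set fK : sphere (0 : EuclideanSpace ℝ (Fin n)) 1 → ℝ≥0∞ :=
    fun u => ENNReal.ofReal (FK u) with hfK
  set fL : sphere (0 : EuclideanSpace ℝ (Fin n)) 1 → ℝ≥0∞ :=
    fun u => ENNReal.ofReal (FL u) with hfL
  -- finiteness of ∫ fK over ω
  haveI : CompactSpace (sphere (0 : EuclideanSpace ℝ (Fin n)) 1) :=
    isCompact_iff_compactSpace.1 (isCompact_sphere 0 1)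
  obtain ⟨C, hC⟩ := (isCompact_range hFKc).bddAbove
  have hfin : ∫⁻ u in ω, fK u ∂(sphMeasure n) ≠ ⊤ := by
    have hb : ∫⁻ u in ω, fK u ∂(sphMeasure n) ≤
        ∫⁻ _ in ω, ENNReal.ofReal C ∂(sphMeasure n) := by
      refine lintegral_mono fun u => ?_
      exact ENNReal.ofReal_le_ofReal (hC (mem_range_self u))
    rw [setLIntegral_const] at hb
    exact ne_top_of_le_ne_top
      (ENNReal.mul_ne_top ENNReal.ofReal_ne_top (measure_lt_top _ _).ne) hb
  -- the chain of inequalities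
  have hA : dualCurv φ K η = dualCurv φ L η := heq η hηopen.measurableSet
  have c1 : dualCurv φ K η ≤ ∫⁻ u in ω, fK u ∂(sphMeasure n) := lintegral_mono_set hKη
  have c2 : ∫⁻ u in ω, fL u ∂(sphMeasure n) ≤ dualCurv φ L η := lintegral_mono_set hLω
  have hωpos : sphMeasure n ω ≠ 0 := (sphMeasure_open_pos hωopen hωne).ne'
  have hstrict : ∫⁻ u in ω, fK u ∂(sphMeasure n) < ∫⁻ u in ω, fL u ∂(sphMeasure n) := by
    refine lintegral_strict_mono ?_ ((ENNReal.continuous_ofReal.comp hFLc).aemeasurable) hfin ?_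
    · simpa [Measure.restrict_eq_zero] using hωpos
    · rw [ae_restrict_iff' hωopen.measurableSet]
      refine ae_of_all _ fun u hu => ?_
      have hρK := radialFn_pos hKcomp hK0 u
      have hρL := radialFn_pos hLcomp hL0 u
      have hFLpos : 0 < FL u := by
        refine mul_pos (hφp _ (smul_ne_zero hρL.ne' (sphere_coe_ne_zero u))) (by positivity)
      refine (ENNReal.ofReal_lt_ofReal_iff hFLpos).2 ?_
      exact hrad u (mem_Ioi.2 hρL) (mem_Ioi.2 hρK) hu
  have : dualCurv φ L η < dualCurv φ L η :=
    lt_of_le_of_lt (hA ▸ c1) (lt_of_lt_of_le hstrict c2)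
  exact lt_irrefl _ this

end Main

/-- uniqueness in the general dual Orlicz-Minkowski problem when
`φ(x)|x|ⁿ` is strictly radially decreasing. -/
theorem stmt16 {n : ℕ} (φ : EuclideanSpace ℝ (Fin n) → ℝ)
    (hφc : ContinuousOn φ {(0 : EuclideanSpace ℝ (Fin n))}ᶜ)
    (hφp : ∀ x : EuclideanSpace ℝ (Fin n), x ≠ 0 → 0 < φ x)
    (hΦi : ∀ t > (0 : ℝ), ∀ u : sphere (0 : EuclideanSpace ℝ (Fin n)) 1,
      IntegrableOn (fun r : ℝ => φ (r • (u : EuclideanSpace ℝ (Fin n))) * r ^ (n - 1)) (Ioi t))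
    (hrad : ∀ u : sphere (0 : EuclideanSpace ℝ (Fin n)) 1,
      StrictAntiOn (fun s : ℝ => φ (s • (u : EuclideanSpace ℝ (Fin n))) * s ^ n) (Ioi (0 : ℝ)))
    (K L : Set (EuclideanSpace ℝ (Fin n)))
    (hKconv : Convex ℝ K) (hKcomp : IsCompact K)
    (hK0 : (0 : EuclideanSpace ℝ (Fin n)) ∈ interior K)
    (hLconv : Convex ℝ L) (hLcomp : IsCompact L)
    (hL0 : (0 : EuclideanSpace ℝ (Fin n)) ∈ interior L)
    (heq : ∀ η : Set (sphere (0 : EuclideanSpace ℝ (Fin n)) 1), MeasurableSet η →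
      dualCurv φ K η = dualCurv φ L η) :
    K = L := by
  have h1 := key_radial_le φ hφc hφp hrad hKconv hKcomp hK0 hLconv hLcomp hL0 heq
  have h2 := key_radial_le φ hφc hφp hrad hLconv hLcomp hL0 hKconv hKcomp hK0
    (fun η hη => (heq η hη).symm)
  exact Set.Subset.antisymm (subset_of_radialFn_le hKcomp hLconv hLcomp hL0 h1)
    (subset_of_radialFn_le hLcomp hKconv hKcomp hK0 h2)
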